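/- arXiv:2304.11021 — 2 statements merged into one kernel-verified Lean document; each statement's English description precedes it below -/
import Mathlib

section
/- The graph K*_{2r+1,2r+1} (complete bipartite graph K_{2r+1,2r+1} minus a perfect matching), for r ≥ 2, is doubly Eulerian. -/
open SimpleGraph

/-- Two closed walks from the same vertex are *avoiding* if at every intermediate
step their current vertices are distinct and non-adjacent. -/
def Avoiding {V : Type*} (G : SimpleGraph V) {u : V} (p q : G.Walk u u) : Prop :=
  ∀ i : ℕ, 0 < i → i < p.length →
    p.getVert i ≠ q.getVert i ∧ ¬ G.Adj (p.getVert i) (q.getVert i)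

/-- A graph is *doubly Eulerian* if from every vertex there exist two avoiding
Eulerian circuits. -/
def DoublyEulerian {V : Type*} [DecidableEq V] (G : SimpleGraph V) : Prop :=
  ∀ u : V, ∃ p q : G.Walk u u, p.IsEulerian ∧ q.IsEulerian ∧ Avoiding G p q


/-- The complete bipartite graph `K_{m,m}` minus a perfect matching: the left
vertex `i` is adjacent to the right vertex `j` exactly when `i ≠ j`. -/
def Kstar (m : ℕ) : SimpleGraph (Fin m ⊕ Fin m) :=
  SimpleGraph.fromRel (fun a b =>
    ∃ i j : Fin m, i ≠ j ∧ a = Sum.inl i ∧ b = Sum.inr j)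

/-!
Label both sides of `K*_{n,n}`, `n = 2r+1`, by `ZMod n`, so that the left vertex `a` and the
right vertex `b` are adjacent iff `a ≠ b`, and encode a closed walk alternating between the sides
by its left vertices `ℓ i` (at time `2i`) and right vertices `ρ i` (at time `2i+1`). A walk of
length `n(n-1)` that meets every edge `{a, a + d}`, `d ≠ 0`, is Eulerian.

The first circuit `P` runs through the edge differences `2q+2, 2q+1` in `r` blocks of `n`
double steps, its left vertex advancing by one each time. The second circuit `Q` takes two
backward double steps with differences `1, 2`, runs forwards through blocks with differences
`2q+4, 2q+3` (`q < r-1`), and finishes the backward block. In the middle part `Q`'s vertices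
trail `P`'s by `4` on the left and by `2` or `4` on the right; in the backward part they are `-i`
against `i` on the left and `1 - i` against `i + 2` resp. `i - 1` on the right, which, `n` being
odd, never meet at an inner time.

Relabelling both sides by the same permutation, and swapping the sides, are automorphisms, so
the pair of circuits based at the left vertex `0` can be moved to any vertex.
-/

open Sum

namespace SimpleGraph

variable {V W : Type*} {G : SimpleGraph V} {G' : SimpleGraph W}

theorem Walk.IsEulerian.map_iso [DecidableEq V] [DecidableEq W] (f : G ≃g G') {u v : V}
    {p : G.Walk u v} (hp : p.IsEulerian) : (p.map f.toHom).IsEulerian := by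
  rw [Walk.isEulerian_iff] at hp ⊢
  refine ⟨hp.1.map f.injective, fun e he => ?_⟩
  have hback : Sym2.map f (Sym2.map f.symm e) = e := by simp [Sym2.map_map]
  rw [Walk.edges_map, ← hback]
  exact List.mem_map_of_mem (hp.2 _ (f.symm.toHom.map_mem_edgeSet he))

theorem Walk.isEulerian_of_length_eq_card [DecidableEq V] [Fintype G.edgeSet] {u v : V}
    (p : G.Walk u v) (hlen : p.length = G.edgeFinset.card)
    (hcov : ∀ e ∈ G.edgeSet, e ∈ p.edges) : p.IsEulerian := by
  have htoFinset : p.edges.toFinset = G.edgeFinset := by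
    ext e
    simpa using ⟨fun he => p.edges_subset_edgeSet he, hcov e⟩
  have hnodup : p.edges.Nodup := by
    rw [← Multiset.coe_nodup, ← Multiset.toFinset_card_eq_card_iff_nodup]
    simpa [hlen] using congrArg Finset.card htoFinset
  exact Walk.IsTrail.isEulerian_of_forall_mem ⟨hnodup⟩ hcov

end SimpleGraph

section Transport

variable {V W : Type*} {G : SimpleGraph V} {G' : SimpleGraph W}

theorem Avoiding.map_iso (f : G ≃g G') {u : V} {p q : G.Walk u u} (h : Avoiding G p q) :
    Avoiding G' (p.map f.toHom) (q.map f.toHom) := by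
  intro i hi hlen
  rw [Walk.length_map] at hlen
  rw [Walk.getVert_map, Walk.getVert_map]
  exact ⟨f.injective.ne (h i hi hlen).1, fun hadj => (h i hi hlen).2 (f.map_adj_iff.1 hadj)⟩

theorem DoublyEulerian.of_exists_iso [DecidableEq V] (u : V)
    (htrans : ∀ v, ∃ f : G ≃g G, f u = v)
    (h : ∃ p q : G.Walk u u, p.IsEulerian ∧ q.IsEulerian ∧ Avoiding G p q) :
    DoublyEulerian G := by
  intro v
  obtain ⟨f, rfl⟩ := htrans v
  obtain ⟨p, q, hp, hq, hpq⟩ := h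
  exact ⟨p.map f.toHom, q.map f.toHom, hp.map_iso f, hq.map_iso f, hpq.map_iso f⟩

end Transport

theorem Nat.mul_add_div_eq_of_lt {n q j : ℕ} (hj : j < n) : (n * q + j) / n = q := by
  rw [Nat.mul_add_div (by omega), Nat.div_eq_of_lt hj, add_zero]

theorem Nat.mul_add_lt_mul_of_lt {n q j r : ℕ} (hq : q < r) (hj : j < n) : n * q + j < n * r :=
  calc n * q + j < n * (q + 1) := by rw [Nat.mul_succ]; omega
    _ ≤ n * r := Nat.mul_le_mul_left n hq

theorem Nat.mul_sub_one_add_self {n r : ℕ} (hr : 1 ≤ r) : n * (r - 1) + n = n * r := by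
  rw [← Nat.mul_succ, Nat.succ_eq_add_one, Nat.sub_add_cancel hr]

theorem ZMod.natCast_mul_add (n q j : ℕ) : ((n * q + j : ℕ) : ZMod n) = j := by
  simp

theorem ZMod.natCast_ne_zero_of_pos_of_lt {n k : ℕ} (h0 : 0 < k) (hk : k < n) :
    (k : ZMod n) ≠ 0 := by
  intro h
  have := congrArg ZMod.val h
  rw [ZMod.val_natCast_of_lt hk, ZMod.val_zero] at this
  omega

theorem ZMod.ne_of_sub_eq_natCast {n k : ℕ} {x y : ZMod n} (h : x - y = k) (h0 : 0 < k)
    (hk : k < n) : x ≠ y := fun hxy =>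
  ZMod.natCast_ne_zero_of_pos_of_lt h0 hk (by rw [← h, hxy, sub_self])

theorem ZMod.exists_eq_add_natCast_of_ne {n : ℕ} [NeZero n] {a b : ZMod n} (hab : a ≠ b) :
    ∃ k : ℕ, 0 < k ∧ k < n ∧ b = a + k := by
  refine ⟨(b - a).val, ?_, ZMod.val_lt _, by rw [ZMod.natCast_zmod_val]; ring⟩
  rw [Nat.pos_iff_ne_zero, ne_eq, ZMod.val_eq_zero, sub_eq_zero]
  exact hab.symm

theorem ZMod.eq_zero_of_add_self_eq_zero {r : ℕ} {x : ZMod (2 * r + 1)} (h : x + x = 0) :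
    x = 0 := by
  have hn : (2 * r + 1 : ZMod (2 * r + 1)) = 0 := by exact_mod_cast ZMod.natCast_self _
  linear_combination (r + 1 : ZMod (2 * r + 1)) * h - x * hn

namespace Kstar

section General

variable {m : ℕ}

@[simp] theorem not_adj_inl_inl (a b : Fin m) : ¬ (Kstar m).Adj (inl a) (inl b) := by
  simp [Kstar]

@[simp] theorem not_adj_inr_inr (a b : Fin m) : ¬ (Kstar m).Adj (inr a) (inr b) := by
  simp [Kstar]

@[simp] theorem adj_inl_inr {a b : Fin m} : (Kstar m).Adj (inl a) (inr b) ↔ a ≠ b := by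
  simp [Kstar]

@[simp] theorem adj_inr_inl {a b : Fin m} : (Kstar m).Adj (inr a) (inl b) ↔ b ≠ a := by
  rw [SimpleGraph.adj_comm, adj_inl_inr]

theorem exists_eq_of_mem_edgeSet {e : Sym2 (Fin m ⊕ Fin m)} (he : e ∈ (Kstar m).edgeSet) :
    ∃ a b, a ≠ b ∧ e = s(inl a, inr b) := by
  induction e with
  | h x y =>
    rcases x with a | a <;> rcases y with b | b <;>
      simp only [mem_edgeSet, not_adj_inl_inl, not_adj_inr_inr, adj_inl_inr, adj_inr_inl] at he
    · exact ⟨a, b, he, rfl⟩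
    · exact ⟨b, a, he, Sym2.eq_swap⟩

theorem card_edgeFinset [Fintype (Kstar m).edgeSet] :
    (Kstar m).edgeFinset.card = m * (m - 1) := by
  classical
  have hinj : Function.Injective fun p : Fin m × Fin m => s(inl p.1, inr p.2) := by
    rintro ⟨a, b⟩ ⟨c, d⟩ h
    simpa using h
  have hedges : (Kstar m).edgeFinset = Finset.univ.offDiag.map ⟨_, hinj⟩ := by
    ext e
    induction e with
    | h x y =>
      rcases x with a | a <;> rcases y with b | b <;> simp [Sym2.eq_swap, ne_comm]
  rw [hedges, Finset.card_map, Finset.offDiag_card, Finset.card_univ, Fintype.card_fin,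
    Nat.mul_sub_one]

def permIso (σ : Equiv.Perm (Fin m)) : Kstar m ≃g Kstar m where
  toEquiv := Equiv.sumCongr σ σ
  map_rel_iff' := by
    rintro (a | a) (b | b) <;> simp [σ.injective.ne_iff]

def swapIso : Kstar m ≃g Kstar m where
  toEquiv := Equiv.sumComm _ _
  map_rel_iff' := by
    rintro (a | a) (b | b) <;> simp [ne_comm]

theorem exists_iso_inl_apply_eq (a : Fin m) (v : Fin m ⊕ Fin m) :
    ∃ f : Kstar m ≃g Kstar m, f (inl a) = v := by
  rcases v with b | b
  · exact ⟨permIso (Equiv.swap a b), by simp [permIso]⟩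
  · exact ⟨(permIso (Equiv.swap a b)).trans swapIso, by simp [permIso, swapIso]⟩

def alternatingWalk (ℓ ρ : ℕ → Fin m) :
    (N : ℕ) → (∀ i < N, ℓ i ≠ ρ i ∧ ℓ (i + 1) ≠ ρ i) → (Kstar m).Walk (inl (ℓ 0)) (inl (ℓ N))
  | 0, _ => .nil
  | N + 1, h =>
    .cons (adj_inl_inr.2 (h 0 N.succ_pos).1) <| .cons (adj_inr_inl.2 (h 0 N.succ_pos).2) <|
      alternatingWalk (fun i => ℓ (i + 1)) (fun i => ρ (i + 1)) N fun i hi => h (i + 1) (by omega)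

variable {ℓ ρ : ℕ → Fin m} {N : ℕ} {h : ∀ i < N, ℓ i ≠ ρ i ∧ ℓ (i + 1) ≠ ρ i}

@[simp] theorem length_alternatingWalk : (alternatingWalk ℓ ρ N h).length = 2 * N := by
  induction N generalizing ℓ ρ with
  | zero => rfl
  | succ N ih => simp only [alternatingWalk, SimpleGraph.Walk.length_cons, ih]; ring

theorem getVert_alternatingWalk_two_mul {i : ℕ} (hi : i ≤ N) :
    (alternatingWalk ℓ ρ N h).getVert (2 * i) = inl (ℓ i) := by
  induction N generalizing ℓ ρ i with
  | zero =>
    obtain rfl : i = 0 := by omega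
    rfl
  | succ N ih =>
    cases i with
    | zero => rfl
    | succ i => exact ih (by omega)

theorem getVert_alternatingWalk_two_mul_add_one {i : ℕ} (hi : i < N) :
    (alternatingWalk ℓ ρ N h).getVert (2 * i + 1) = inr (ρ i) := by
  induction N generalizing ℓ ρ i with
  | zero => omega
  | succ N ih =>
    cases i with
    | zero => rfl
    | succ i => exact ih (by omega)

theorem mem_edges_alternatingWalk {i : ℕ} (hi : i < N) :
    s(inl (ℓ i), inr (ρ i)) ∈ (alternatingWalk ℓ ρ N h).edges ∧
      s(inl (ℓ (i + 1)), inr (ρ i)) ∈ (alternatingWalk ℓ ρ N h).edges := by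
  induction N generalizing ℓ ρ i with
  | zero => omega
  | succ N ih =>
    cases i with
    | zero => simp [alternatingWalk, Sym2.eq_swap]
    | succ i =>
      obtain ⟨h1, h2⟩ := ih (ℓ := fun i => ℓ (i + 1)) (ρ := fun i => ρ (i + 1)) (i := i) (by omega)
      simp only [alternatingWalk, SimpleGraph.Walk.edges_cons, List.mem_cons]
      exact ⟨.inr (.inr h1), .inr (.inr h2)⟩

theorem isEulerian_alternatingWalk (hN : 2 * N = m * (m - 1))
    (hcov : ∀ a b, a ≠ b → ∃ i < N, (ℓ i = a ∨ ℓ (i + 1) = a) ∧ ρ i = b) :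
    (alternatingWalk ℓ ρ N h).IsEulerian := by
  classical
  refine (alternatingWalk ℓ ρ N h).isEulerian_of_length_eq_card
    (by rw [length_alternatingWalk, card_edgeFinset, hN]) fun e he => ?_
  obtain ⟨a, b, hab, rfl⟩ := exists_eq_of_mem_edgeSet he
  obtain ⟨i, hi, hℓ | hℓ, rfl⟩ := hcov a b hab <;> subst hℓ
  · exact (mem_edges_alternatingWalk hi).1
  · exact (mem_edges_alternatingWalk hi).2

theorem exists_isEulerian_avoiding_of_alternatingWalk {ℓ' ρ' : ℕ → Fin m}
    {h' : ∀ i < N, ℓ' i ≠ ρ' i ∧ ℓ' (i + 1) ≠ ρ' i} {a : Fin m}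
    (h0 : ℓ 0 = a) (hN : ℓ N = a) (h0' : ℓ' 0 = a) (hN' : ℓ' N = a)
    (hE : (alternatingWalk ℓ ρ N h).IsEulerian) (hE' : (alternatingWalk ℓ' ρ' N h').IsEulerian)
    (hℓ : ∀ i, 0 < i → i < N → ℓ i ≠ ℓ' i) (hρ : ∀ i < N, ρ i ≠ ρ' i) :
    ∃ p q : (Kstar m).Walk (inl a) (inl a), p.IsEulerian ∧ q.IsEulerian ∧ Avoiding _ p q := by
  classical
  refine ⟨(alternatingWalk ℓ ρ N h).copy (by rw [h0]) (by rw [hN]),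
    (alternatingWalk ℓ' ρ' N h').copy (by rw [h0']) (by rw [hN']),
    by simpa [SimpleGraph.Walk.IsEulerian] using hE,
    by simpa [SimpleGraph.Walk.IsEulerian] using hE', fun i hi hlen => ?_⟩
  simp only [SimpleGraph.Walk.getVert_copy, SimpleGraph.Walk.length_copy, length_alternatingWalk] at hlen ⊢
  obtain ⟨j, rfl | rfl⟩ := Nat.even_or_odd' i
  · rw [getVert_alternatingWalk_two_mul (by omega), getVert_alternatingWalk_two_mul (by omega)]
    simpa using hℓ j (by omega) (by omega)
  · rw [getVert_alternatingWalk_two_mul_add_one (by omega), getVert_alternatingWalk_two_mul_add_one (by omega)]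
    simpa using hρ j (by omega)

end General

section OddCircuits

variable {r : ℕ}

def leftP (r i : ℕ) : ZMod (2 * r + 1) := i

def rightP (r i : ℕ) : ZMod (2 * r + 1) := i + 2 * (i / (2 * r + 1) : ℕ) + 2

theorem leftP_ne_rightP {i : ℕ} (hi : i < (2 * r + 1) * r) :
    leftP r i ≠ rightP r i ∧ leftP r (i + 1) ≠ rightP r i := by
  have hq : i / (2 * r + 1) < r := by
    rw [Nat.div_lt_iff_lt_mul (by omega)]; linarith
  constructor
  · refine (ZMod.ne_of_sub_eq_natCast (k := 2 * (i / (2 * r + 1)) + 2) ?_ ?_ ?_).symm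
    · simp only [leftP, rightP]; push_cast; ring
    all_goals omega
  · refine (ZMod.ne_of_sub_eq_natCast (k := 2 * (i / (2 * r + 1)) + 1) ?_ ?_ ?_).symm
    · simp only [leftP, rightP]; push_cast; ring
    all_goals omega

theorem exists_leftP_rightP {a b : ZMod (2 * r + 1)} (hab : a ≠ b) :
    ∃ i < (2 * r + 1) * r, (leftP r i = a ∨ leftP r (i + 1) = a) ∧ rightP r i = b := by
  obtain ⟨k, hk0, hkr, rfl⟩ := ZMod.exists_eq_add_natCast_of_ne hab
  obtain ⟨q, rfl | rfl⟩ := Nat.even_or_odd' k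
  · obtain ⟨q, rfl⟩ : ∃ q', q = q' + 1 := ⟨q - 1, by omega⟩
    have hj := ZMod.val_lt a
    refine ⟨(2 * r + 1) * q + a.val, ?_, .inl ?_, ?_⟩
    · exact Nat.mul_add_lt_mul_of_lt (by omega) hj
    · simp [leftP]
    · rw [rightP, Nat.mul_add_div_eq_of_lt hj, ZMod.natCast_mul_add, ZMod.natCast_zmod_val]
      push_cast; ring
  · have hj := ZMod.val_lt (a - 1)
    refine ⟨(2 * r + 1) * q + (a - 1).val, ?_, .inr ?_, ?_⟩
    · exact Nat.mul_add_lt_mul_of_lt (by omega) hj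
    · simp [leftP]
    · rw [rightP, Nat.mul_add_div_eq_of_lt hj, ZMod.natCast_mul_add, ZMod.natCast_zmod_val]
      push_cast; ring

def IsMiddle (r i : ℕ) : Prop := 2 ≤ i ∧ i < 2 + (2 * r + 1) * (r - 1)

instance (r : ℕ) : DecidablePred (IsMiddle r) := fun i =>
  inferInstanceAs (Decidable (2 ≤ i ∧ i < 2 + (2 * r + 1) * (r - 1)))

def leftQ (r i : ℕ) : ZMod (2 * r + 1) := if IsMiddle r i then i - 4 else -i

def rightQ (r i : ℕ) : ZMod (2 * r + 1) :=
  if IsMiddle r i then i + 2 * ((i - 2) / (2 * r + 1) : ℕ) else 1 - i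

theorem leftQ_eq_neg {i : ℕ} (h : i ≤ 2 ∨ 2 + (2 * r + 1) * (r - 1) ≤ i) : leftQ r i = -i := by
  by_cases hmid : IsMiddle r i
  · obtain rfl : i = 2 := by unfold IsMiddle at hmid; omega
    rw [leftQ, if_pos hmid]; push_cast; ring
  · rw [leftQ, if_neg hmid]

theorem leftQ_succ_of_isMiddle {i : ℕ} (h : IsMiddle r i) : leftQ r (i + 1) = i - 3 := by
  by_cases h' : IsMiddle r (i + 1)
  · rw [leftQ, if_pos h']; push_cast; ring
  · obtain rfl : i = (2 * r + 1) * (r - 1) + 1 := by unfold IsMiddle at h h'; omega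
    rw [leftQ_eq_neg (by omega), Nat.add_assoc, ZMod.natCast_mul_add, ZMod.natCast_mul_add]
    ring

theorem lt_two_or_exists_of_not_isMiddle (hr : 1 ≤ r) {i : ℕ} (hmid : ¬IsMiddle r i)
    (hi : i < (2 * r + 1) * r) :
    i < 2 ∨ ∃ j, 2 ≤ j ∧ j < 2 * r + 1 ∧ i = (2 * r + 1) * (r - 1) + j := by
  have := Nat.mul_sub_one_add_self (n := 2 * r + 1) hr
  unfold IsMiddle at hmid
  by_cases h2 : i < 2
  · exact .inl h2
  · exact .inr ⟨i - (2 * r + 1) * (r - 1), by omega, by omega, by omega⟩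

theorem isMiddle_mul_add_add_two {q j : ℕ} (hq : q < r - 1) (hj : j < 2 * r + 1) :
    IsMiddle r ((2 * r + 1) * q + j + 2) ∧ (2 * r + 1) * q + j + 2 < (2 * r + 1) * r ∧
      ((2 * r + 1) * q + j + 2 - 2) / (2 * r + 1) = q := by
  have hlt := Nat.mul_add_lt_mul_of_lt hq hj
  have := Nat.mul_sub_one_add_self (n := 2 * r + 1) (r := r) (by omega)
  refine ⟨⟨by omega, by omega⟩, by omega, ?_⟩
  rw [Nat.add_sub_cancel, Nat.mul_add_div_eq_of_lt hj]

theorem leftQ_ne_rightQ (hr : 1 ≤ r) (i : ℕ) :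
    leftQ r i ≠ rightQ r i ∧ leftQ r (i + 1) ≠ rightQ r i := by
  by_cases hmid : IsMiddle r i
  · have hq : (i - 2) / (2 * r + 1) < r - 1 := by
      rw [Nat.div_lt_iff_lt_mul (by omega), Nat.mul_comm]
      unfold IsMiddle at hmid
      omega
    constructor
    · refine (ZMod.ne_of_sub_eq_natCast (k := 2 * ((i - 2) / (2 * r + 1)) + 4) ?_ ?_ ?_).symm
      · rw [leftQ, rightQ, if_pos hmid, if_pos hmid]; push_cast; ring
      all_goals omega
    · refine (ZMod.ne_of_sub_eq_natCast (k := 2 * ((i - 2) / (2 * r + 1)) + 3) ?_ ?_ ?_).symm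
      · rw [leftQ_succ_of_isMiddle hmid, rightQ, if_pos hmid]; push_cast; ring
      all_goals omega
  · have hout : i < 2 ∨ 2 + (2 * r + 1) * (r - 1) ≤ i := by unfold IsMiddle at hmid; omega
    rw [rightQ, if_neg hmid]
    constructor
    · refine (ZMod.ne_of_sub_eq_natCast (k := 1) ?_ ?_ ?_).symm
      · rw [leftQ_eq_neg (by omega)]; push_cast; ring
      all_goals omega
    · refine (ZMod.ne_of_sub_eq_natCast (k := 2) ?_ ?_ ?_).symm
      · rw [leftQ_eq_neg (by omega)]; push_cast; ring
      all_goals omega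

theorem exists_not_isMiddle (hr : 1 ≤ r) (c : ZMod (2 * r + 1)) :
    ∃ i < (2 * r + 1) * r, ¬IsMiddle r i ∧ (i : ZMod (2 * r + 1)) = c := by
  have hc := ZMod.val_lt c
  by_cases h2 : c.val < 2
  · refine ⟨c.val, ?_, fun h => by unfold IsMiddle at h; omega, ZMod.natCast_zmod_val c⟩
    nlinarith
  · refine ⟨(2 * r + 1) * (r - 1) + c.val, Nat.mul_add_lt_mul_of_lt (by omega) hc,
      fun h => by unfold IsMiddle at h; omega, ?_⟩
    rw [ZMod.natCast_mul_add, ZMod.natCast_zmod_val]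

theorem exists_leftQ_rightQ (hr : 1 ≤ r) {a b : ZMod (2 * r + 1)} (hab : a ≠ b) :
    ∃ i < (2 * r + 1) * r, (leftQ r i = a ∨ leftQ r (i + 1) = a) ∧ rightQ r i = b := by
  obtain ⟨k, hk0, hkr, rfl⟩ := ZMod.exists_eq_add_natCast_of_ne hab
  rcases (by omega : k = 1 ∨ k = 2 ∨ 3 ≤ k) with rfl | rfl | hk3
  · obtain ⟨i, hi, hmid, hc⟩ := exists_not_isMiddle (by omega) (-a)
    refine ⟨i, hi, .inl ?_, ?_⟩
    · rw [leftQ, if_neg hmid, hc, neg_neg]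
    · rw [rightQ, if_neg hmid, hc]; push_cast; ring
  · obtain ⟨i, hi, hmid, hc⟩ := exists_not_isMiddle (by omega) (-(a + 1))
    refine ⟨i, hi, .inr ?_, ?_⟩
    · rw [leftQ_eq_neg (by unfold IsMiddle at hmid; omega)]; push_cast; rw [hc]; ring
    · rw [rightQ, if_neg hmid, hc]; push_cast; ring
  obtain ⟨q, rfl | rfl⟩ := Nat.even_or_odd' k
  · obtain ⟨q, rfl⟩ : ∃ q', q = q' + 2 := ⟨q - 2, by omega⟩
    obtain ⟨hmid, hi, hdiv⟩ :=
      isMiddle_mul_add_add_two (q := q) (by omega) (ZMod.val_lt (a + 2))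
    refine ⟨_, hi, .inl ?_, ?_⟩
    · rw [leftQ, if_pos hmid, Nat.cast_add, ZMod.natCast_mul_add, ZMod.natCast_zmod_val]
      push_cast; ring
    · rw [rightQ, if_pos hmid, hdiv, Nat.cast_add, ZMod.natCast_mul_add, ZMod.natCast_zmod_val]
      push_cast; ring
  · obtain ⟨q, rfl⟩ : ∃ q', q = q' + 1 := ⟨q - 1, by omega⟩
    obtain ⟨hmid, hi, hdiv⟩ :=
      isMiddle_mul_add_add_two (q := q) (by omega) (ZMod.val_lt (a + 1))
    refine ⟨_, hi, .inr ?_, ?_⟩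
    · rw [leftQ_succ_of_isMiddle hmid, Nat.cast_add, ZMod.natCast_mul_add, ZMod.natCast_zmod_val]
      push_cast; ring
    · rw [rightQ, if_pos hmid, hdiv, Nat.cast_add, ZMod.natCast_mul_add, ZMod.natCast_zmod_val]
      push_cast; ring

theorem leftP_ne_leftQ (hr : 2 ≤ r) {i : ℕ} (h0 : 0 < i) (hi : i < (2 * r + 1) * r) :
    leftP r i ≠ leftQ r i := by
  by_cases hmid : IsMiddle r i
  · refine ZMod.ne_of_sub_eq_natCast (k := 4) ?_ (by omega) (by omega)
    rw [leftP, leftQ, if_pos hmid]; push_cast; ring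
  intro h
  rw [leftP, leftQ, if_neg hmid] at h
  have hzero : (i : ZMod (2 * r + 1)) = 0 :=
    ZMod.eq_zero_of_add_self_eq_zero (by linear_combination h)
  rcases lt_two_or_exists_of_not_isMiddle (by omega) hmid hi with hi2 | ⟨j, hj2, hj, rfl⟩
  · exact ZMod.natCast_ne_zero_of_pos_of_lt h0 (by omega) hzero
  · rw [ZMod.natCast_mul_add] at hzero
    exact ZMod.natCast_ne_zero_of_pos_of_lt (by omega) hj hzero

theorem rightP_ne_rightQ (hr : 2 ≤ r) {i : ℕ} (hi : i < (2 * r + 1) * r) :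
    rightP r i ≠ rightQ r i := by
  by_cases hmid : IsMiddle r i
  · obtain ⟨q, j, hj, rfl⟩ : ∃ q j, j < 2 * r + 1 ∧ i = (2 * r + 1) * q + j + 2 := by
      have := Nat.div_add_mod (i - 2) (2 * r + 1)
      unfold IsMiddle at hmid
      exact ⟨(i - 2) / (2 * r + 1), (i - 2) % (2 * r + 1), Nat.mod_lt _ (by omega), by omega⟩
    have hcarry : (j + 2) / (2 * r + 1) < 2 := by
      rw [Nat.div_lt_iff_lt_mul (by omega)]; omega
    refine ZMod.ne_of_sub_eq_natCast (k := 2 * ((j + 2) / (2 * r + 1)) + 2) ?_ (by omega)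
      (by omega)
    rw [rightP, rightQ, if_pos hmid, Nat.add_sub_cancel, Nat.mul_add_div_eq_of_lt hj,
      Nat.add_assoc, Nat.mul_add_div (by omega)]
    push_cast; ring
  rw [rightQ, if_neg hmid]
  rcases lt_two_or_exists_of_not_isMiddle (by omega) hmid hi with hi2 | ⟨j, hj2, hj, rfl⟩
  · refine ZMod.ne_of_sub_eq_natCast (k := 2 * i + 1) ?_ (by omega) (by omega)
    rw [rightP, Nat.div_eq_of_lt (by omega)]; push_cast; ring
  · intro h
    rw [rightP, Nat.mul_add_div_eq_of_lt hj, ZMod.natCast_mul_add, Nat.cast_sub (by omega)] at h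
    have hn : 2 * (r : ZMod (2 * r + 1)) + 1 = 0 := by exact_mod_cast ZMod.natCast_self _
    have hone := ZMod.eq_zero_of_add_self_eq_zero (x := (j : ZMod (2 * r + 1)) - 1)
      (by push_cast at h; linear_combination h - hn)
    refine ZMod.natCast_ne_zero_of_pos_of_lt (n := 2 * r + 1) (k := j - 1) (by omega) (by omega) ?_
    rw [Nat.cast_sub (by omega), Nat.cast_one, hone]

theorem exists_isEulerian_avoiding (hr : 2 ≤ r) :
    ∃ p q : (Kstar (2 * r + 1)).Walk (inl (0 : ZMod (2 * r + 1))) (inl 0),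
      p.IsEulerian ∧ q.IsEulerian ∧ Avoiding _ p q := by
  have hcard : 2 * ((2 * r + 1) * r) = (2 * r + 1) * (2 * r + 1 - 1) := by
    rw [Nat.add_sub_cancel]; ring
  have hP0 : leftP r 0 = 0 := by simp [leftP]
  have hPN : leftP r ((2 * r + 1) * r) = 0 := by simp [leftP]
  have hQ0 : leftQ r 0 = 0 := by simp [leftQ_eq_neg]
  have hQN : leftQ r ((2 * r + 1) * r) = 0 := by
    have := Nat.mul_sub_one_add_self (n := 2 * r + 1) (r := r) (by omega)
    rw [leftQ_eq_neg (by omega)]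
    simp
  exact exists_isEulerian_avoiding_of_alternatingWalk (ℓ := leftP r) (ρ := rightP r)
    (ℓ' := leftQ r) (ρ' := rightQ r) (h := fun _ hi => leftP_ne_rightP hi)
    (h' := fun i _ => leftQ_ne_rightQ (by omega) i) hP0 hPN hQ0 hQN
    (isEulerian_alternatingWalk hcard fun _ _ => exists_leftP_rightP)
    (isEulerian_alternatingWalk hcard fun _ _ => exists_leftQ_rightQ (by omega))
    (fun _ h0 hi => leftP_ne_leftQ hr h0 hi) (fun _ hi => rightP_ne_rightQ hr hi)

end OddCircuits

end Kstar

/-- The graph `K*_{2r+1,2r+1}` (complete bipartite minus a perfect matching),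
`r ≥ 2`, is doubly Eulerian. -/
theorem Kstar_doublyEulerian (r : ℕ) (hr : 2 ≤ r) :
    DoublyEulerian (Kstar (2 * r + 1)) :=
  DoublyEulerian.of_exists_iso (inl 0) (Kstar.exists_iso_inl_apply_eq 0)
    (Kstar.exists_isEulerian_avoiding hr)
end

section
/- An Eulerian graph with exactly one vertex of degree 4 and all other vertices of degree 2 (edge excess 1) is not doubly Eulerian. -/
/-!
Follow an Eulerian circuit `w` from the degree-4 vertex `x` until it first returns to `x`, at
time `m ≥ 2`; every vertex strictly inside this stretch has degree 2. From its midpoint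
`u = w (m / 2)` a trail has no choice but to run along the stretch, forwards or backwards, so
each of two Eulerian circuits from `u` reaches `x` at time `m / 2` (backwards) or `m - m / 2`
(forwards). Running the same way, they meet at `x`; running opposite ways, at time `m / 2` one
is at `x` and the other at `w (2 * (m / 2))`, which is `x` or its neighbour `w (m - 1)`.
-/

open SimpleGraph

namespace SimpleGraph

variable {V : Type*} {G : SimpleGraph V}

theorem eq_of_adj_of_degree_eq_two {v a b c : V} [Fintype (G.neighborSet v)]
    (hv : G.degree v = 2) (ha : G.Adj v a) (hb : G.Adj v b) (hc : G.Adj v c)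
    (hac : a ≠ c) (hbc : b ≠ c) : a = b := by
  classical
  obtain ⟨y, z, -, hyz⟩ := Finset.card_eq_two.mp (G.card_neighborFinset_eq_degree v ▸ hv)
  have hmem : ∀ d, G.Adj v d → d = y ∨ d = z := fun d hd => by
    simpa [hyz] using (G.mem_neighborFinset v d).mpr hd
  grind

namespace Walk

variable {u v w : V}

theorem IsTrail.getVert_ne_getVert_add_two {p : G.Walk u v} (hp : p.IsTrail) {j : ℕ}
    (hj : j + 2 ≤ p.length) : p.getVert j ≠ p.getVert (j + 2) := by
  intro h
  have hedge : p.edges[j]'(by simp; omega) = p.edges[j + 1]'(by simp; omega) := by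
    rw [getElem_edges, getElem_edges, h, Sym2.eq_swap]
  have := hp.edges_nodup.getElem_inj_iff.mp hedge
  omega

protected theorem IsTrail.drop {p : G.Walk u v} (hp : p.IsTrail) (n : ℕ) :
    (p.drop n).IsTrail := by
  rw [isTrail_def, edges_drop]
  exact hp.edges_nodup.sublist (List.drop_sublist _ _)

protected theorem IsTrail.take {p : G.Walk u v} (hp : p.IsTrail) (n : ℕ) :
    (p.take n).IsTrail := by
  rw [isTrail_def, edges_take]
  exact hp.edges_nodup.sublist (List.take_sublist _ _)

theorem IsEulerian.length_eq [DecidableEq V] {u' v' : V} {p : G.Walk u v} {q : G.Walk u' v'}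
    (hp : p.IsEulerian) (hq : q.IsEulerian) : p.length = q.length := by
  rw [← length_edges, ← length_edges]
  refine ((List.perm_ext_iff_of_nodup hp.isTrail.edges_nodup hq.isTrail.edges_nodup).mpr
    fun e => ?_).length_eq
  rw [hp.mem_edges_iff, hq.mem_edges_iff]

theorem IsEulerian.length_pos_of_adj [DecidableEq V] {p : G.Walk u v} (hp : p.IsEulerian)
    {a b : V} (hab : G.Adj a b) : 0 < p.length := by
  have : s(a, b) ∈ p.edges := hp.mem_edges_iff.mpr hab
  rw [← length_edges]
  exact List.length_pos_of_mem this

theorem exists_first_return (p : G.Walk u u) (hp : 0 < p.length) :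
    ∃ m, 1 < m ∧ m ≤ p.length ∧ p.getVert m = u ∧ ∀ j, 0 < j → j < m → p.getVert j ≠ u := by
  classical
  have hex : ∃ m, 0 < m ∧ p.getVert m = u := ⟨p.length, hp, p.getVert_length⟩
  obtain ⟨hm0, hmu⟩ := Nat.find_spec hex
  have hne : p.getVert 1 ≠ u := by
    simpa using (p.adj_getVert_succ (i := 0) hp).ne'
  refine ⟨Nat.find hex, ?_, Nat.find_le ⟨hp, p.getVert_length⟩, hmu,
    fun j hj hjm hju => Nat.find_min hex hjm ⟨hj, hju⟩⟩
  by_contra h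
  exact hne (by rwa [show Nat.find hex = 1 by omega] at hmu)

theorem IsTrail.getVert_eq_of_degree_eq_two [G.LocallyFinite] {p : G.Walk u v} {q : G.Walk u w}
    (hp : p.IsTrail) (hq : q.IsTrail) {n : ℕ} (hpn : n ≤ p.length) (hqn : n ≤ q.length)
    (h1 : p.getVert 1 = q.getVert 1) (hdeg : ∀ j, 0 < j → j < n → G.degree (p.getVert j) = 2)
    {j : ℕ} (hj : j ≤ n) : p.getVert j = q.getVert j := by
  induction j using Nat.twoStepInduction with
  | zero => simp
  | one => exact h1
  | more j ih ih1 =>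
    have hprev : G.Adj (p.getVert (j + 1)) (p.getVert j) := (p.adj_getVert_succ (by omega)).symm
    refine eq_of_adj_of_degree_eq_two (hdeg (j + 1) (by omega) (by omega))
      (p.adj_getVert_succ (by omega)) ?_ hprev
      (hp.getVert_ne_getVert_add_two (by omega)).symm ?_
    · rw [ih1 (by omega)]
      exact q.adj_getVert_succ (by omega)
    · rw [ih (by omega)]
      exact (hq.getVert_ne_getVert_add_two (by omega)).symm

theorem IsTrail.getVert_eq_add_or_sub_of_degree_eq_two [G.LocallyFinite] {p : G.Walk u v}
    (hp : p.IsTrail) {m s : ℕ} (hm : m ≤ p.length) (hs : 0 < s) (hsm : s < m)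
    (hdeg : ∀ j, 0 < j → j < m → G.degree (p.getVert j) = 2)
    {r : G.Walk (p.getVert s) w} (hr : r.IsTrail) (hrm : m ≤ r.length) :
    (∀ j ≤ m - s, r.getVert j = p.getVert (s + j)) ∨
      (∀ j ≤ s, r.getVert j = p.getVert (s - j)) := by
  by_cases hback : r.getVert 1 = p.getVert (s - 1)
  · right
    intro j hj
    have hlen : min s p.length = s := by omega
    have := (hp.take s).reverse.getVert_eq_of_degree_eq_two hr (n := s)
      (by simp; omega) (by omega) (by simp [getVert_reverse, hlen, hback]) (fun i hi his => by
        convert hdeg (s - i) (by omega) (by omega) using 2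
        simp [getVert_reverse, hlen]) hj
    simpa [getVert_reverse, hlen] using this.symm
  · left
    intro j hj
    have hnext : G.Adj (p.getVert s) (p.getVert (s + 1)) := p.adj_getVert_succ (by omega)
    have hprev : G.Adj (p.getVert s) (p.getVert (s - 1)) := by
      simpa [Nat.sub_add_cancel hs] using (p.adj_getVert_succ (i := s - 1) (by omega)).symm
    have hfwd : r.getVert 1 = p.getVert (s + 1) := by
      refine eq_of_adj_of_degree_eq_two (hdeg s hs hsm) ?_ hnext hprev hback ?_
      · simpa using r.adj_getVert_succ (i := 0) (by omega)
      · have := hp.getVert_ne_getVert_add_two (j := s - 1) (by omega)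
        rw [show s - 1 + 2 = s + 1 by omega] at this
        exact this.symm
    have := (hp.drop s).getVert_eq_of_degree_eq_two hr (n := m - s)
      (by simp; omega) (by omega) (by simp [hfwd]) (fun i hi his => by
        convert hdeg (s + i) (by omega) (by omega) using 2
        simp) hj
    simpa using this.symm

end Walk

end SimpleGraph

open Walk in
theorem not_doublyEulerian_one_deg_four_general
    {V : Type*} [Fintype V] [DecidableEq V] (G : SimpleGraph V) [DecidableRel G.Adj]
    (x : V) (hx : G.degree x = 4)
    (hother : ∀ y : V, y ≠ x → G.degree y = 2) :
    ¬ DoublyEulerian G := by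
  intro hDE
  obtain ⟨w, -, hw, -, -⟩ := hDE x
  obtain ⟨y, hxy⟩ : ∃ y, G.Adj x y := G.degree_pos_iff_exists_adj x |>.mp (by omega)
  obtain ⟨m, hm1, hmw, hmx, hmin⟩ := w.exists_first_return (hw.length_pos_of_adj hxy)
  set s := m / 2
  obtain ⟨p, q, hp, hq, hpq⟩ := hDE (w.getVert s)
  have hdir (r : G.Walk (w.getVert s) (w.getVert s)) (hr : r.IsEulerian) :=
    hw.isTrail.getVert_eq_add_or_sub_of_degree_eq_two hmw (by omega) (by omega)
      (fun j hj hjm => hother _ (hmin j hj hjm)) hr.isTrail (hr.length_eq hw ▸ hmw)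
  have hmid : w.getVert (s + s) = x ∨ G.Adj (w.getVert (s + s)) x := by
    obtain h | h : s + s = m ∨ s + s + 1 = m := by omega
    · exact .inl (h ▸ hmx)
    · exact .inr (by simpa [h, hmx] using w.adj_getVert_succ (i := s + s) (by omega))
  have hmp : m ≤ p.length := hp.length_eq hw ▸ hmw
  rcases hdir p hp with hp' | hp' <;> rcases hdir q hq with hq' | hq'
  · exact (hpq (m - s) (by omega) (by omega)).1 <| by
      rw [hp' _ le_rfl, hq' _ le_rfl]
  · have h := hpq s (by omega) (by omega)
    rw [hp' s (by omega), hq' s le_rfl, Nat.sub_self, getVert_zero] at h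
    exact hmid.elim h.1 h.2
  · have h := hpq s (by omega) (by omega)
    rw [hp' s le_rfl, hq' s (by omega), Nat.sub_self, getVert_zero] at h
    exact hmid.elim (fun h' => h.1 h'.symm) (fun h' => h.2 h'.symm)
  · exact (hpq s (by omega) (by omega)).1 <| by
      rw [hp' _ le_rfl, hq' _ le_rfl]

/-- A connected graph with exactly one vertex of degree 4 and all other vertices
of degree 2 (edge excess 1) is not doubly Eulerian. -/
theorem not_doublyEulerian_one_deg_four
    {V : Type*} [Fintype V] [DecidableEq V] (G : SimpleGraph V) [DecidableRel G.Adj]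
    (hconn : G.Connected) (x : V) (hx : G.degree x = 4)
    (hother : ∀ y : V, y ≠ x → G.degree y = 2) :
    ¬ DoublyEulerian G :=
  not_doublyEulerian_one_deg_four_general G x hx hother
end
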